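/- arXiv:1608.01756 — 4 statements merged into one kernel-verified Lean document; each statement's English description precedes it below -/
import Mathlib

section
/- For every s > 0 and every y ∈ (0,1), ∫₁^∞ (1 − exp(−s·x^{−1/y})) dx = s^y · [Γ(1−y) + y · ∫_s^∞ t^{−y−1} e^{−t} dt] − 1; that is, the integral equals ħ(s, y). -/
/-!
Substituting `x = (s / t) ^ y` turns the integral into `s ^ y ∫₀ˢ y t ^ (-y - 1) (1 - e^{-t}) dt`.
Integrating by parts against `d(-t ^ (-y))` (the boundary term at `0` vanishes since
`1 - e^{-t} ≤ t` and `y < 1`) leaves `s ^ y ∫₀ˢ t ^ (-y) e^{-t} dt - (1 - e^{-s})`. Finally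
`∫₀ˢ t ^ (-y) e^{-t} dt = Γ(1 - y) - Γ(1 - y, s)`, and the recurrence
`Γ(1 - y, s) = s ^ (-y) e^{-s} - y Γ(-y, s)` of the incomplete gamma function gives `ħ(s, y)`.
-/

open MeasureTheory Set Real Filter Topology

lemma rpow_mul_rpow_neg_self {s : ℝ} (hs : 0 < s) (y : ℝ) : s ^ y * s ^ (-y) = 1 := by
  rw [← rpow_add hs, add_neg_cancel, rpow_zero]

lemma integral_Ioi_one_comp_mul_rpow_neg_inv (f : ℝ → ℝ) {s y : ℝ} (hs : 0 < s) (hy : 0 < y) :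
    ∫ x in Ioi 1, f (s * x ^ (-(1 / y))) = ∫ t in Ioo 0 s, y * s ^ y * t ^ (-y - 1) * f t := by
  set ψ : ℝ → ℝ := fun t => s ^ y * t ^ (-y)
  have hss := rpow_mul_rpow_neg_self hs y
  have hψ' : ∀ t ∈ Ioo 0 s, HasDerivWithinAt ψ (s ^ y * (-y * t ^ (-y - 1))) (Ioo 0 s) t :=
    fun t ht => ((hasDerivAt_rpow_const (.inl ht.1.ne')).const_mul _).hasDerivWithinAt
  have hψ_anti : StrictAntiOn ψ (Ioo 0 s) := fun a ha b _ hab =>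
    mul_lt_mul_of_pos_left (rpow_lt_rpow_of_neg ha.1 hab (neg_neg_of_pos hy)) (by positivity)
  have hφψ : ∀ t, 0 < t → s * ψ t ^ (-(1 / y)) = t := fun t ht => by
    rw [mul_rpow (by positivity) (by positivity), ← rpow_mul hs.le, ← rpow_mul ht.le,
      show y * -(1 / y) = -1 by field_simp, show -y * -(1 / y) = 1 by field_simp, rpow_neg_one,
      rpow_one, mul_inv_cancel_left₀ hs.ne']
  have hψ_image : ψ '' Ioo 0 s = Ioi 1 := by
    ext x
    constructor
    · rintro ⟨t, ht, rfl⟩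
      rw [mem_Ioi, ← hss]
      exact mul_lt_mul_of_pos_left (rpow_lt_rpow_of_neg ht.1 ht.2 (neg_neg_of_pos hy))
        (by positivity)
    · intro (hx : 1 < x)
      have hx0 : 0 < x := one_pos.trans hx
      refine ⟨s * x ^ (-(1 / y)), ⟨by positivity, ?_⟩, ?_⟩
      · exact mul_lt_of_lt_one_right hs (rpow_lt_one_of_one_lt_of_neg hx (by simpa using hy))
      · show s ^ y * (s * x ^ (-(1 / y))) ^ (-y) = x
        rw [mul_rpow hs.le (by positivity), ← mul_assoc, hss, one_mul, ← rpow_mul hx0.le,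
          show -(1 / y) * -y = 1 by field_simp, rpow_one]
  rw [← hψ_image, integral_image_eq_integral_abs_deriv_smul measurableSet_Ioo hψ' hψ_anti.injOn]
  refine setIntegral_congr_fun measurableSet_Ioo fun t ht => ?_
  rw [hφψ t ht.1, smul_eq_mul, abs_mul, abs_mul, abs_neg, abs_of_pos hy,
    abs_of_pos (by positivity : 0 < s ^ y), abs_of_pos (rpow_pos_of_pos ht.1 _)]
  ring

lemma integrableOn_rpow_mul_exp_neg_Ioi (a : ℝ) {s : ℝ} (hs : 0 < s) :
    IntegrableOn (fun t => t ^ a * exp (-t)) (Ioi s) := by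
  refine integrable_of_isBigO_exp_neg one_half_pos ?_ ?_
  · exact fun t ht => ((continuousAt_rpow_const t a (.inl (hs.trans_le ht).ne')).mul
      (continuous_exp.comp continuous_neg).continuousAt).continuousWithinAt
  · have h := (isLittleO_rpow_exp_pos_mul_atTop a one_half_pos).isBigO.mul
      (Asymptotics.isBigO_refl (fun t : ℝ => exp (-t)) atTop)
    refine h.congr_right fun t => ?_
    rw [← exp_add]; ring_nf

lemma Gamma_eq_integral_Ioc_add_integral_Ioi {a s : ℝ} (ha : 0 < a) (hs : 0 < s) :
    Gamma a = (∫ t in Ioc 0 s, t ^ (a - 1) * exp (-t)) + ∫ t in Ioi s, t ^ (a - 1) * exp (-t) := by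
  have hint : IntegrableOn (fun t => t ^ (a - 1) * exp (-t)) (Ioi 0) :=
    (GammaIntegral_convergent ha).congr_fun (fun t _ => mul_comm _ _) measurableSet_Ioi
  rw [Gamma_eq_integral ha, ← Ioc_union_Ioi_eq_Ioi hs.le, ← setIntegral_union
    (Ioc_disjoint_Ioi le_rfl) measurableSet_Ioi (hint.mono_set Ioc_subset_Ioi_self)
    (hint.mono_set (Ioi_subset_Ioi hs.le))]
  simp only [mul_comm]

lemma integral_Ioi_rpow_mul_exp_neg (a : ℝ) {s : ℝ} (hs : 0 < s) :
    ∫ t in Ioi s, t ^ a * exp (-t) =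
      s ^ a * exp (-s) + a * ∫ t in Ioi s, t ^ (a - 1) * exp (-t) := by
  have hderiv : ∀ t ∈ Ioi s, HasDerivAt (fun u => -(u ^ a * exp (-u)))
      (t ^ a * exp (-t) - a * (t ^ (a - 1) * exp (-t))) t := fun t ht =>
    (((hasDerivAt_rpow_const (.inl (hs.trans ht).ne')).mul
      (hasDerivAt_neg t).exp).neg).congr_deriv (by ring)
  have hcont : ContinuousWithinAt (fun u => -(u ^ a * exp (-u))) (Ici s) s :=
    ((continuousAt_rpow_const s a (.inl hs.ne')).mul
      (continuous_exp.comp continuous_neg).continuousAt).neg.continuousWithinAt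
  have htop : Tendsto (fun u => -(u ^ a * exp (-u))) atTop (𝓝 0) := by
    simpa using (tendsto_rpow_mul_exp_neg_mul_atTop_nhds_zero a 1 one_pos).neg
  have h := integral_Ioi_of_hasDerivAt_of_tendsto hcont hderiv
    ((integrableOn_rpow_mul_exp_neg_Ioi a hs).sub
      ((integrableOn_rpow_mul_exp_neg_Ioi (a - 1) hs).const_mul a)) htop
  rw [integral_sub (integrableOn_rpow_mul_exp_neg_Ioi a hs)
    ((integrableOn_rpow_mul_exp_neg_Ioi (a - 1) hs).const_mul a), integral_const_mul] at h
  linarith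

lemma one_sub_exp_neg_nonneg {t : ℝ} (ht : 0 ≤ t) : 0 ≤ 1 - exp (-t) := by
  simpa using exp_le_one_iff.mpr (neg_nonpos.mpr ht)

lemma rpow_mul_one_sub_exp_neg_le (a : ℝ) {t : ℝ} (ht : 0 < t) :
    t ^ a * (1 - exp (-t)) ≤ t ^ (a + 1) := by
  rw [rpow_add_one ht.ne']
  exact mul_le_mul_of_nonneg_left (by linarith [one_sub_le_exp_neg t]) (by positivity)

lemma tendsto_rpow_mul_one_sub_exp_neg_nhdsGT_zero {y : ℝ} (hy : y < 1) :
    Tendsto (fun t => t ^ (-y) * (1 - exp (-t))) (𝓝[>] 0) (𝓝 0) := by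
  have hlim : Tendsto (fun t : ℝ => t ^ (-y + 1)) (𝓝[>] 0) (𝓝 0) := by
    have hpos : 0 < -y + 1 := by linarith
    simpa [zero_rpow hpos.ne'] using
      ((continuousAt_rpow_const 0 _ (.inr hpos.le)).tendsto).mono_left nhdsWithin_le_nhds
  refine squeeze_zero' ?_ ?_ hlim <;> filter_upwards [self_mem_nhdsWithin] with t (ht : 0 < t)
  · exact mul_nonneg (by positivity) (one_sub_exp_neg_nonneg ht.le)
  · exact rpow_mul_one_sub_exp_neg_le (-y) ht

lemma integrableOn_rpow_mul_one_sub_exp_neg_Ioc {y : ℝ} (hy : y < 1) (s : ℝ) :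
    IntegrableOn (fun t => t ^ (-y - 1) * (1 - exp (-t))) (Ioc 0 s) := by
  refine Integrable.mono' (intervalIntegral.intervalIntegrable_rpow' (by linarith : -1 < -y)).1
    (by fun_prop) ?_
  filter_upwards [ae_restrict_mem measurableSet_Ioc] with t ⟨ht, _⟩
  rw [norm_of_nonneg (mul_nonneg (by positivity) (one_sub_exp_neg_nonneg ht.le))]
  simpa using rpow_mul_one_sub_exp_neg_le (-y - 1) ht

lemma integral_Ioc_rpow_mul_one_sub_exp_neg {y : ℝ} (hy : y < 1) {s : ℝ} (hs : 0 < s) :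
    y * ∫ t in Ioc 0 s, t ^ (-y - 1) * (1 - exp (-t)) =
      (∫ t in Ioc 0 s, t ^ (-y) * exp (-t)) - s ^ (-y) * (1 - exp (-s)) := by
  set Φ : ℝ → ℝ := fun t => -(t ^ (-y) * (1 - exp (-t)))
  have hk : IntegrableOn (fun t => t ^ (-y) * exp (-t)) (Ioc 0 s) :=
    ((GammaIntegral_convergent (sub_pos.mpr hy)).congr_fun
      (fun t _ => by rw [sub_sub_cancel_left, mul_comm]) measurableSet_Ioi).mono_set
      Ioc_subset_Ioi_self
  have hg := (integrableOn_rpow_mul_one_sub_exp_neg_Ioc hy s).const_mul y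
  have hΦ' : ∀ t ∈ Ioo 0 s, HasDerivAt Φ
      (y * (t ^ (-y - 1) * (1 - exp (-t))) - t ^ (-y) * exp (-t)) t := fun t ht =>
    (((hasDerivAt_rpow_const (.inl ht.1.ne')).mul
      ((hasDerivAt_neg t).exp.const_sub 1)).neg).congr_deriv (by ring)
  have hΦ0 : Tendsto Φ (𝓝[>] 0) (𝓝 0) := by
    simpa using (tendsto_rpow_mul_one_sub_exp_neg_nhdsGT_zero hy).neg
  have hΦs : Tendsto Φ (𝓝[<] s) (𝓝 (Φ s)) :=
    ((continuousAt_rpow_const s _ (.inl hs.ne')).mul (continuousAt_const.sub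
      (continuous_exp.comp continuous_neg).continuousAt)).neg.tendsto.mono_left
        nhdsWithin_le_nhds
  have hFTC := intervalIntegral.integral_eq_sub_of_hasDerivAt_of_tendsto hs hΦ'
    ((intervalIntegrable_iff_integrableOn_Ioc_of_le hs.le).mpr (hg.sub hk)) hΦ0 hΦs
  rw [intervalIntegral.integral_of_le hs.le, integral_sub hg hk, integral_const_mul] at hFTC
  simp only [Φ] at hFTC
  linarith

/-- For every `s > 0` and every `y ∈ (0,1)`,
`∫₁^∞ (1 − exp(−s·x^{−1/y})) dx = s^y · [Γ(1−y) + y · ∫_s^∞ t^{−y−1} e^{−t} dt] − 1`,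
i.e. the integral equals `ħ(s, y)`. -/
theorem hbar_integral_representation (s y : ℝ) (hs : 0 < s) (hy : y ∈ Set.Ioo (0 : ℝ) 1) :
    ∫ x in Ioi (1 : ℝ), (1 - Real.exp (-s * x ^ (-(1 / y)))) =
      s ^ y * (Real.Gamma (1 - y) + y * ∫ t in Ioi s, t ^ (-y - 1) * Real.exp (-t)) - 1 := by
  obtain ⟨hy0, hy1⟩ := hy
  have hsubst : ∫ x in Ioi (1 : ℝ), (1 - exp (-s * x ^ (-(1 / y)))) =
      s ^ y * (y * ∫ t in Ioc 0 s, t ^ (-y - 1) * (1 - exp (-t))) := by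
    simp_rw [neg_mul]
    rw [integral_Ioi_one_comp_mul_rpow_neg_inv (fun u => 1 - exp (-u)) hs hy0,
      integral_Ioc_eq_integral_Ioo, ← integral_const_mul, ← integral_const_mul]
    simp only [mul_assoc, mul_left_comm (s ^ y)]
  have hGamma := Gamma_eq_integral_Ioc_add_integral_Ioi (sub_pos.mpr hy1) hs
  rw [sub_sub_cancel_left] at hGamma
  rw [hsubst, integral_Ioc_rpow_mul_one_sub_exp_neg hy1 hs, hGamma]
  linear_combination -rpow_mul_rpow_neg_self hs y - s ^ y * integral_Ioi_rpow_mul_exp_neg (-y) hs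
end

section
/- For every x > 0 and every y ∈ (0,1), one has 0 ≤ y · x^y · ∫_x^∞ t^{−1−y} e^{−t} dt ≤ e^{−x}. Consequently, with ħ(x, y) ≔ x^y·[Γ(1−y) + y·∫_x^∞ t^{−y−1} e^{−t} dt] − 1, the bounds x^y·Γ(1−y) − 1 ≤ ħ(x, y) ≤ x^y·Γ(1−y) − 1 + e^{−x} hold. -/
open MeasureTheory Set

/-- The function `ħ(x, y) ≔ x^y·[Γ(1−y) + y·Γ(−y, x)] − 1` of the paper, where
`Γ(−y, x) = ∫_x^∞ t^{−y−1} e^{−t} dt` is the upper incomplete gamma function. -/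
noncomputable def hbar (x y : ℝ) : ℝ :=
  x ^ y * (Real.Gamma (1 - y) + y * ∫ t in Ioi x, t ^ (-y - 1) * Real.exp (-t)) - 1

/-- For every `x > 0` and every `y ∈ (0,1)`,
`0 ≤ y·x^y·∫_x^∞ t^{−1−y} e^{−t} dt ≤ e^{−x}`, and consequently
`x^y·Γ(1−y) − 1 ≤ ħ(x, y) ≤ x^y·Γ(1−y) − 1 + e^{−x}`. -/
theorem hbar_tight_bounds (x y : ℝ) (hx : 0 < x) (hy : y ∈ Set.Ioo (0 : ℝ) 1) :
    (0 ≤ y * x ^ y * ∫ t in Ioi x, t ^ (-1 - y) * Real.exp (-t)) ∧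
    (y * x ^ y * ∫ t in Ioi x, t ^ (-1 - y) * Real.exp (-t)) ≤ Real.exp (-x) ∧
    x ^ y * Real.Gamma (1 - y) - 1 ≤ hbar x y ∧
    hbar x y ≤ x ^ y * Real.Gamma (1 - y) - 1 + Real.exp (-x) := by
  obtain ⟨hy0, hy1⟩ := hy
  have hexp : (-1 - y) < -1 := by linarith
  have hint_rpow : IntegrableOn (fun t : ℝ => t ^ (-1 - y)) (Ioi x) :=
    integrableOn_Ioi_rpow_of_lt hexp hx
  have hint : IntegrableOn (fun t : ℝ => t ^ (-1 - y) * Real.exp (-t)) (Ioi x) := by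
    apply Integrable.mono' hint_rpow
    · apply Measurable.aestronglyMeasurable
      fun_prop
    · filter_upwards [ae_restrict_mem measurableSet_Ioi] with t ht
      have htpos : (0 : ℝ) < t := hx.trans ht
      rw [Real.norm_eq_abs, abs_of_nonneg (by positivity)]
      nth_rewrite 2 [show (t : ℝ) ^ (-1 - y) = t ^ (-1 - y) * 1 by ring]
      exact mul_le_mul_of_nonneg_left (Real.exp_le_one_iff.2 (by linarith)) (by positivity)
  have hnonneg : 0 ≤ ∫ t in Ioi x, t ^ (-1 - y) * Real.exp (-t) := by
    apply setIntegral_nonneg measurableSet_Ioi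
    intro t ht
    have : (0 : ℝ) < t := hx.trans ht
    positivity
  have hle : (∫ t in Ioi x, t ^ (-1 - y) * Real.exp (-t)) ≤
      Real.exp (-x) * (x ^ (-y) / y) := by
    have h1 : (∫ t in Ioi x, t ^ (-1 - y) * Real.exp (-t)) ≤
        ∫ t in Ioi x, t ^ (-1 - y) * Real.exp (-x) := by
      apply setIntegral_mono_on hint (hint_rpow.mul_const _) measurableSet_Ioi
      intro t ht
      have htpos : (0 : ℝ) < t := hx.trans ht
      exact mul_le_mul_of_nonneg_left (Real.exp_le_exp.2 (by linarith [le_of_lt (mem_Ioi.1 ht)])) (by positivity)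
    have h2 : (∫ t in Ioi x, t ^ (-1 - y) * Real.exp (-x)) =
        Real.exp (-x) * (x ^ (-y) / y) := by
      rw [integral_mul_const, integral_Ioi_rpow_of_lt hexp hx]
      have : (-1 - y) + 1 = -y := by ring
      rw [this]
      field_simp
    linarith
  have hx_pow : (0 : ℝ) < x ^ y := Real.rpow_pos_of_pos hx y
  have hmul : y * x ^ y * ∫ t in Ioi x, t ^ (-1 - y) * Real.exp (-t) ≤ Real.exp (-x) := by
    calc y * x ^ y * ∫ t in Ioi x, t ^ (-1 - y) * Real.exp (-t)
        ≤ y * x ^ y * (Real.exp (-x) * (x ^ (-y) / y)) := by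
          apply mul_le_mul_of_nonneg_left hle (by positivity)
      _ = Real.exp (-x) * (x ^ y * x ^ (-y)) := by field_simp
      _ = Real.exp (-x) := by
          rw [← Real.rpow_add hx, add_neg_cancel, Real.rpow_zero, mul_one]
  have heq : (-y - 1 : ℝ) = -1 - y := by ring
  have hhbar : hbar x y = x ^ y * Real.Gamma (1 - y) - 1 +
      y * x ^ y * ∫ t in Ioi x, t ^ (-1 - y) * Real.exp (-t) := by
    unfold hbar
    rw [heq]
    ring
  refine ⟨by positivity, hmul, ?_, ?_⟩
  · rw [hhbar]; nlinarith [mul_nonneg (mul_nonneg hy0.le hx_pow.le) hnonneg]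
  · rw [hhbar]; linarith
end

section
/- For every s > 0 and every z ∈ (0,1), ∫₁^∞ (1 − 1/(1 + s·x^{−1/z})) dx = s^z · ( πz/sin(πz) − ∫₀^{s^{−z}} dt/(1 + t^{1/z}) ); that is, the integral equals ℓ(s, z). -/
/-!
Writing `1 - 1/(1 + s x^{-1/z}) = 1/(1 + (s^{-z} x)^{1/z})`, the substitution `x = s^z t` turns
the left side into `s^z ∫_{s^{-z}}^∞ dt/(1 + t^{1/z})`, the tail of the complete integral
`∫_0^∞ dt/(1 + t^{1/z})`. Substituting `t = u^z` and then `u = x/(1-x)`, the complete integral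
becomes `z B(z, 1 - z) = z Γ(z) Γ(1 - z) = πz / sin(πz)` by the reflection formula.
-/

open MeasureTheory Set Real

theorem integral_rpow_mul_one_sub_rpow {u v : ℝ} (hu : 0 < u) (hv : 0 < v) :
    ∫ x in (0 : ℝ)..1, x ^ (u - 1) * (1 - x) ^ (v - 1) = Gamma u * Gamma v / Gamma (u + v) := by
  have hB := Complex.betaIntegral_eq_Gamma_mul_div u v (by simpa) (by simpa)
  have hcast : ∀ x ∈ uIcc (0 : ℝ) 1, (x : ℂ) ^ ((u : ℂ) - 1) * (1 - (x : ℂ)) ^ ((v : ℂ) - 1) =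
      ((x ^ (u - 1) * (1 - x) ^ (v - 1) : ℝ) : ℂ) := by
    intro x hx
    rw [uIcc_of_le zero_le_one] at hx
    push_cast
    rw [Complex.ofReal_cpow hx.1, Complex.ofReal_cpow (by linarith [hx.2])]
    push_cast
    ring_nf
  rw [Complex.betaIntegral, intervalIntegral.integral_congr hcast, intervalIntegral.integral_ofReal,
    ← Complex.ofReal_add, Complex.Gamma_ofReal, Complex.Gamma_ofReal, Complex.Gamma_ofReal] at hB
  exact_mod_cast hB

theorem integral_Ioi_rpow_mul_one_add_rpow {u v : ℝ} (hu : 0 < u) (hv : 0 < v) :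
    ∫ t in Ioi (0 : ℝ), t ^ (u - 1) * (1 + t) ^ (-(u + v)) = Gamma u * Gamma v / Gamma (u + v) := by
  have himage : (fun x : ℝ => x / (1 - x)) '' Ioo 0 1 = Ioi 0 := by
    ext t
    constructor
    · rintro ⟨x, hx, rfl⟩
      exact div_pos hx.1 (sub_pos.2 hx.2)
    · intro (ht : 0 < t)
      refine ⟨t / (1 + t), ⟨by positivity, (div_lt_one (by positivity)).2 (by linarith)⟩, ?_⟩
      field_simp
      ring
  have hderiv : ∀ x ∈ Ioo (0 : ℝ) 1,
      HasDerivWithinAt (fun x : ℝ => x / (1 - x)) ((1 - x) ^ 2)⁻¹ (Ioo 0 1) x := by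
    intro x hx
    have hne : 1 - x ≠ 0 := (sub_pos.2 hx.2).ne'
    refine (((hasDerivAt_id' x).div ((hasDerivAt_id' x).const_sub 1) hne)
      |>.hasDerivWithinAt).congr_deriv ?_
    field_simp
    ring
  have hinj : InjOn (fun x : ℝ => x / (1 - x)) (Ioo 0 1) := by
    intro a ha b hb hab
    have := (sub_pos.2 ha.2).ne'
    have := (sub_pos.2 hb.2).ne'
    field_simp at hab
    linarith
  rw [← himage, integral_image_eq_integral_abs_deriv_smul measurableSet_Ioo hderiv hinj,
    ← integral_rpow_mul_one_sub_rpow hu hv, intervalIntegral.integral_of_le zero_le_one,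
    integral_Ioc_eq_integral_Ioo]
  refine setIntegral_congr_fun measurableSet_Ioo fun x hx => ?_
  have hx0 : 0 < x := hx.1
  have h1x : 0 < 1 - x := sub_pos.2 hx.2
  have hsum : 1 + x / (1 - x) = (1 - x)⁻¹ := by field_simp; ring
  simp only [smul_eq_mul, hsum]
  rw [abs_of_pos (by positivity), div_rpow hx0.le h1x.le, inv_rpow h1x.le, ← rpow_neg h1x.le,
    neg_neg, div_eq_mul_inv, ← rpow_neg h1x.le, ← rpow_natCast, ← rpow_neg h1x.le,
    show v - 1 = -(2 : ℕ) + (-(u - 1) + (u + v)) by push_cast; ring,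
    rpow_add h1x (-(2 : ℕ)), rpow_add h1x (-(u - 1))]
  ring

theorem integral_Ioi_one_div_one_add_rpow_one_div {z : ℝ} (hz₀ : 0 < z) (hz₁ : z < 1) :
    ∫ t in Ioi (0 : ℝ), 1 / (1 + t ^ (1 / z)) = π * z / sin (π * z) := by
  rw [← integral_comp_rpow_Ioi_of_pos hz₀]
  have hcongr : ∀ x ∈ Ioi (0 : ℝ), (z * x ^ (z - 1)) • (1 / (1 + (x ^ z) ^ (1 / z))) =
      z * (x ^ (z - 1) * (1 + x) ^ (-(z + (1 - z)))) := by
    intro x hx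
    rw [← rpow_mul (le_of_lt hx), mul_one_div_cancel hz₀.ne', rpow_one, add_sub_cancel,
      rpow_neg_one, smul_eq_mul, one_div, mul_assoc]
  rw [setIntegral_congr_fun measurableSet_Ioi hcongr, integral_const_mul,
    integral_Ioi_rpow_mul_one_add_rpow hz₀ (sub_pos.2 hz₁), add_sub_cancel, Gamma_one, div_one,
    Gamma_mul_Gamma_one_sub]
  ring

theorem integrableOn_Ioi_one_div_one_add_rpow_one_div {z : ℝ} (hz₀ : 0 < z) (hz₁ : z < 1) :
    IntegrableOn (fun t : ℝ => 1 / (1 + t ^ (1 / z))) (Ioi 0) := by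
  refine Integrable.of_integral_ne_zero ?_
  rw [integral_Ioi_one_div_one_add_rpow_one_div hz₀ hz₁]
  have : 0 < sin (π * z) := sin_pos_of_pos_of_lt_pi (by positivity) (by nlinarith [pi_pos])
  positivity

theorem one_sub_one_div_one_add_mul_rpow_neg {s z x : ℝ} (hs : 0 < s) (hz : z ≠ 0) (hx : 0 < x) :
    1 - 1 / (1 + s * x ^ (-(1 / z))) = 1 / (1 + (s ^ (-z) * x) ^ (1 / z)) := by
  rw [rpow_neg hx.le, mul_rpow (rpow_nonneg hs.le _) hx.le, ← rpow_mul hs.le, neg_mul,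
    mul_one_div_cancel hz, rpow_neg_one]
  field_simp
  ring

/-- For every `s > 0` and every `z ∈ (0,1)`,
`∫₁^∞ (1 − 1/(1 + s·x^{−1/z})) dx = s^z·(πz/sin(πz) − ∫₀^{s^{−z}} dt/(1 + t^{1/z}))`,
i.e. the integral equals `ℓ(s, z)`. -/
theorem ell_integral_representation (s z : ℝ) (hs : 0 < s) (hz : z ∈ Set.Ioo (0 : ℝ) 1) :
    ∫ x in Ioi (1 : ℝ), (1 - 1 / (1 + s * x ^ (-(1 / z)))) =
      s ^ z * (Real.pi * z / Real.sin (Real.pi * z) -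
        ∫ t in Ioc (0 : ℝ) (s ^ (-z)), 1 / (1 + t ^ (1 / z))) := by
  obtain ⟨hz₀, hz₁⟩ := hz
  have ha : 0 < s ^ (-z) := rpow_pos_of_pos hs _
  have hsplit := intervalIntegral.integral_interval_add_Ioi
    (integrableOn_Ioi_one_div_one_add_rpow_one_div hz₀ hz₁)
    ((integrableOn_Ioi_one_div_one_add_rpow_one_div hz₀ hz₁).mono_set (Ioi_subset_Ioi ha.le))
  rw [intervalIntegral.integral_of_le ha.le, integral_Ioi_one_div_one_add_rpow_one_div hz₀ hz₁]
    at hsplit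
  calc ∫ x in Ioi (1 : ℝ), (1 - 1 / (1 + s * x ^ (-(1 / z))))
      = ∫ x in Ioi (1 : ℝ), 1 / (1 + (s ^ (-z) * x) ^ (1 / z)) :=
        setIntegral_congr_fun measurableSet_Ioi fun x hx =>
          one_sub_one_div_one_add_mul_rpow_neg hs hz₀.ne' (zero_lt_one.trans hx)
    _ = s ^ z * ∫ t in Ioi (s ^ (-z)), 1 / (1 + t ^ (1 / z)) := by
        rw [integral_comp_mul_left_Ioi (fun t => 1 / (1 + t ^ (1 / z))) 1 ha, mul_one,
          smul_eq_mul, rpow_neg hs.le, inv_inv]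
    _ = _ := by rw [← hsplit, add_sub_cancel_left]
end

section
/- Special integral technique of Theorem 5: let Z be a real-valued random variable on a probability space with Z > 0 almost surely. Then E[ln(1 + 1/Z)] = ∫₀^∞ s^{−1} (1 − e^{−s}) · E[e^{−s Z}] ds, where both sides may simultaneously be infinite. -/
/-!
Since `s⁻¹ (1 - e^{-s}) e^{-sz} = s⁻¹ (e^{-zs} - e^{-(z+1)s})`, Frullani's integral for
`x ↦ e^{-x}` gives `∫₀^∞ s⁻¹ (1 - e^{-s}) e^{-sz} ds = log ((z + 1) / z)` for every `z > 0`.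
The integrand is nonnegative, so integrating this identity at `z = Z ω` against `P` and
exchanging the two integrals (Tonelli) yields the claim, finite or not.
-/

open MeasureTheory Set Real

lemma inv_mul_one_sub_exp_neg_mem_Icc {s : ℝ} (hs : 0 < s) :
    s⁻¹ * (1 - exp (-s)) ∈ Icc 0 1 := by
  have hle : 1 - exp (-s) ≤ s := by linarith [one_sub_le_exp_neg s]
  have hnn : 0 ≤ 1 - exp (-s) := by linarith [exp_le_one_iff.mpr (neg_nonpos.mpr hs.le)]
  exact ⟨by positivity, by rw [inv_mul_le_iff₀ hs]; linarith⟩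

lemma integrableOn_inv_mul_one_sub_exp_neg_mul_exp {z : ℝ} (hz : 0 < z) :
    IntegrableOn (fun s ↦ s⁻¹ * (1 - exp (-s)) * exp (-s * z)) (Ioi 0) := by
  refine Integrable.mono' (exp_neg_integrableOn_Ioi 0 hz) (by fun_prop)
    (ae_restrict_of_forall_mem measurableSet_Ioi fun s hs ↦ ?_)
  obtain ⟨h0, h1⟩ := inv_mul_one_sub_exp_neg_mem_Icc hs
  rw [Real.norm_of_nonneg (mul_nonneg h0 (exp_pos _).le), neg_mul_comm, mul_comm s]
  exact mul_le_of_le_one_left (exp_pos _).le h1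

lemma integral_inv_mul_one_sub_exp_neg_mul_exp {z : ℝ} (hz : 0 < z) :
    ∫ s in Ioi 0, s⁻¹ * (1 - exp (-s)) * exp (-s * z) = log (1 + 1 / z) := by
  have hcont : Continuous fun x : ℝ ↦ exp (-x) := by fun_prop
  have hL : Filter.Tendsto (fun x : ℝ ↦ exp (-x)) (nhdsWithin 0 (Ioi 0)) (nhds 1) := by
    simpa using hcont.continuousAt.tendsto.mono_left (nhdsWithin_le_nhds (a := (0:ℝ)))
  have hfactor : ∀ s : ℝ, s⁻¹ * (1 - exp (-s)) * exp (-s * z) =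
      s⁻¹ • (exp (-(z * s)) - exp (-((z + 1) * s))) := fun s ↦ by
    rw [smul_eq_mul, add_mul, neg_add, exp_add]; ring_nf
  have hfr := Frullani.integral_Ioi_eq (hcont.locallyIntegrable.locallyIntegrableOn _)
    hz (by linarith : 0 < z + 1) hL tendsto_exp_neg_atTop_nhds_zero
    (by simpa only [hfactor] using integrableOn_inv_mul_one_sub_exp_neg_mul_exp hz)
  rw [← funext hfactor] at hfr
  rw [hfr, smul_eq_mul, sub_zero, mul_one, add_div, div_self hz.ne', add_comm]

lemma lintegral_inv_mul_one_sub_exp_neg_mul_exp {z : ℝ} (hz : 0 < z) :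
    ∫⁻ s in Ioi 0, ENNReal.ofReal (s⁻¹ * (1 - exp (-s))) * ENNReal.ofReal (exp (-s * z)) =
      ENNReal.ofReal (log (1 + 1 / z)) := by
  rw [← integral_inv_mul_one_sub_exp_neg_mul_exp hz,
    ofReal_integral_eq_lintegral_ofReal (integrableOn_inv_mul_one_sub_exp_neg_mul_exp hz)
      (ae_restrict_of_forall_mem measurableSet_Ioi fun s hs ↦
        mul_nonneg (inv_mul_one_sub_exp_neg_mem_Icc hs).1 (exp_pos _).le)]
  exact setLIntegral_congr_fun measurableSet_Ioi fun s hs ↦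
    (ENNReal.ofReal_mul (inv_mul_one_sub_exp_neg_mem_Icc hs).1).symm

/-- Special integral technique of Theorem 5: let `Z` be a real-valued random variable with
`Z > 0` almost surely. Then `E[ln(1 + 1/Z)] = ∫₀^∞ s^{−1}(1 − e^{−s})·E[e^{−sZ}] ds`,
where both sides may simultaneously be infinite (stated with lower Lebesgue integrals). -/
theorem special_integral_technique {Ω : Type*} [MeasurableSpace Ω]
    (P : Measure Ω) [IsProbabilityMeasure P]
    (Z : Ω → ℝ) (hZm : Measurable Z) (hZ : ∀ᵐ ω ∂P, 0 < Z ω) :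
    ∫⁻ ω, ENNReal.ofReal (Real.log (1 + 1 / Z ω)) ∂P =
      ∫⁻ s in Ioi (0 : ℝ), ENNReal.ofReal (s⁻¹ * (1 - Real.exp (-s))) *
        ∫⁻ ω, ENNReal.ofReal (Real.exp (-s * Z ω)) ∂P := by
  simp_rw [← lintegral_const_mul' _ _ ENNReal.ofReal_ne_top]
  rw [lintegral_lintegral_swap (by fun_prop)]
  exact lintegral_congr_ae (hZ.mono fun ω hω ↦
    (lintegral_inv_mul_one_sub_exp_neg_mul_exp hω).symm)
end
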